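/- Let M be a matching and suppose G contains an odd M-alternating cycle C = x - v_1 - M(v_1) - ... - v_k - M(v_k) - x in which xv_1 and xM(v_k) are blocking edges (leaves of a star with middle node x) and all other non-matching edges of C have w_M-weight 0. Then the fractional matching p obtained from M by setting p = 1/2 on all edges of C, p = 1 on the loop at M(x), and p = χ_{M~} elsewhere satisfies Σ_e w_M(e) p_e = 1 > 0; hence M is not fractional popular. -/

import Mathlib

open Finset
open scoped Classical

noncomputable section

/-- A (partial) matching on a graph, given as a symmetric partner function. -/
def IsMatchingOn {W : Type*} (H : SimpleGraph W) (f : W → Option W) : Prop :=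
  (∀ v w, f v = some w → f w = some v) ∧ (∀ v w, f v = some w → H.Adj v w)

/-- Number of matched vertices of a partner function. -/
def msize {W : Type*} [Fintype W] (f : W → Option W) : ℕ :=
  (Finset.univ.filter (fun x => f x ≠ none)).card

/-- f is a maximum-size matching on H. -/
def MaxMatchingOn {W : Type*} [Fintype W] (H : SimpleGraph W) (f : W → Option W) : Prop :=
  IsMatchingOn H f ∧ ∀ g, IsMatchingOn H g → msize g ≤ msize f

variable {V : Type*} [Fintype V] [DecidableEq V]

/-- Rank of a situation (partner or unmatched); smaller is better, being
unmatched is worst (any neighbor is preferred to being unmatched). -/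
def rkv (rank : V → V → ℕ) (v : V) : Option V → WithTop ℕ
  | none => ⊤
  | some w => (rank v w : WithTop ℕ)

/-- vote of v comparing situation s to situation t: +1 if v prefers s, -1 if v prefers t. -/
def vote (rank : V → V → ℕ) (v : V) (s t : Option V) : ℤ :=
  if rkv rank v s < rkv rank v t then 1 else if rkv rank v t < rkv rank v s then -1 else 0

variable (G : SimpleGraph V) (rank : V → V → ℕ)

/-- The preferences are strict (a linear order) on the neighbors of each node. -/
def StrictPrefs : Prop := ∀ u v w, G.Adj u v → G.Adj u w → rank u v = rank u w → v = w

/-- g is more popular than f : strictly more nodes prefer g than prefer f. -/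
def MorePopular (g f : V → Option V) : Prop :=
  (Finset.univ.filter (fun v => rkv rank v (g v) < rkv rank v (f v))).card >
  (Finset.univ.filter (fun v => rkv rank v (f v) < rkv rank v (g v))).card

/-- f is popular: no matching is more popular than f. -/
def PopularM (f : V → Option V) : Prop :=
  ∀ g, IsMatchingOn G g → ¬ MorePopular rank g f

/-- uv is a blocking edge for matching f. -/
def BlockingEdge (f : V → Option V) (u v : V) : Prop :=
  G.Adj u v ∧ f u ≠ some v ∧
    rkv rank u (some v) < rkv rank u (f u) ∧ rkv rank v (some u) < rkv rank v (f v)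

/-- Vote based weight of an edge uv. -/
def wE (f : V → Option V) (u v : V) : ℤ :=
  vote rank u (some v) (f u) + vote rank v (some u) (f v)

/-- Vote based weight of the loop at u. -/
def wL (f : V → Option V) (u : V) : ℤ := if f u = none then 0 else -1

/-- G_M : G minus the edges of weight -2. -/
def GMgraph (f : V → Option V) : SimpleGraph V where
  Adj u v := G.Adj u v ∧ wE rank f u v ≠ -2
  symm := by
    constructor
    intro u v h
    refine ⟨h.1.symm, ?_⟩
    have h2 := h.2
    simp only [wE] at h2 ⊢
    omega
  loopless := ⟨fun v h => G.loopless.1 v h.1⟩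

/-- An M-alternating path p 0, p 1, ..., p n (n edges) in graph H with matching f. -/
def AltPath {W : Type*} (H : SimpleGraph W) (f : W → Option W) (p : ℕ → W) (n : ℕ) : Prop :=
  (∀ i j, i ≤ n → j ≤ n → p i = p j → i = j) ∧
  (∀ i, i < n → H.Adj (p i) (p (i + 1))) ∧
  (∀ i, i + 1 < n → (f (p i) = some (p (i + 1)) ↔ ¬ f (p (i + 1)) = some (p (i + 2))))

/-- An M-alternating cycle p 0, ..., p n = p 0 (n edges, n even), with
matching edges at odd positions. -/
def AltCycle {W : Type*} (H : SimpleGraph W) (f : W → Option W) (p : ℕ → W) (n : ℕ) : Prop :=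
  4 ≤ n ∧ Even n ∧ p n = p 0 ∧ (∀ i j, i < n → j < n → p i = p j → i = j) ∧
  (∀ i, i < n → H.Adj (p i) (p (i + 1))) ∧
  (∀ i, i < n → (f (p i) = some (p (i + 1)) ↔ Odd i))

/-- Blocking structure (i): an alternating cycle in G_M with a blocking edge. -/
def StructI (f : V → Option V) : Prop :=
  ∃ (p : ℕ → V) (n : ℕ), AltCycle (GMgraph G rank f) f p n ∧
    ∃ i, i < n ∧ BlockingEdge G rank f (p i) (p (i + 1))

/-- Blocking structure (ii): an alternating path in G_M whose first and last
edges are two disjoint blocking edges. -/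
def StructII (f : V → Option V) : Prop :=
  ∃ (p : ℕ → V) (n : ℕ), 3 ≤ n ∧ AltPath (GMgraph G rank f) f p n ∧
    BlockingEdge G rank f (p 0) (p 1) ∧ BlockingEdge G rank f (p (n - 1)) (p n)

/-- Blocking structure (iii): an alternating path in G_M from an unmatched node
ending in a blocking edge. -/
def StructIII (f : V → Option V) : Prop :=
  ∃ (p : ℕ → V) (n : ℕ), 1 ≤ n ∧ AltPath (GMgraph G rank f) f p n ∧ f (p 0) = none ∧
    BlockingEdge G rank f (p (n - 1)) (p n)

/-- Vertex set of the auxiliary graph G_M^* : original nodes, blocking nodes b_v,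
star nodes b_S (indexed by the middle node of the star), and the contracted node u. -/
abbrev Vstar (V : Type*) := V ⊕ V ⊕ V ⊕ Unit

def origV : V → Vstar V := Sum.inl
def bNodeV : V → Vstar V := fun v => Sum.inr (Sum.inl v)
def sNodeV : V → Vstar V := fun v => Sum.inr (Sum.inr (Sum.inl v))
def uNode : Vstar V := Sum.inr (Sum.inr (Sum.inr ()))

/-- v is an endpoint of some blocking edge. -/
def IsBlockEnd (f : V → Option V) (v : V) : Prop := ∃ w, BlockingEdge G rank f v w

/-- v is a leaf node: incident to exactly one blocking edge. -/
def IsLeafNode (f : V → Option V) (v : V) : Prop := ∃! w, BlockingEdge G rank f v w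

/-- v is a leaf of a star: a leaf node whose unique blocking neighbor z also has
another leaf node attached by a blocking edge. -/
def IsStarLeaf (f : V → Option V) (v : V) : Prop :=
  IsLeafNode G rank f v ∧ ∃ z, BlockingEdge G rank f v z ∧
    ∃ v', v' ≠ v ∧ IsLeafNode G rank f v' ∧ BlockingEdge G rank f v' z

/-- The (unique) blocking neighbor of a leaf node. -/
def midOf (f : V → Option V) (v : V) : V :=
  if h : ∃ z, BlockingEdge G rank f v z then h.choose else v

/-- b(v): the auxiliary unmatched node attached to the blocking-edge endpoint v. -/
def bmap (f : V → Option V) (v : V) : Vstar V :=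
  if IsStarLeaf G rank f v then sNodeV (midOf G rank f v) else bNodeV v

/-- Projection of an original node into G_M^*: unmatched nodes are contracted to u. -/
def projV (f : V → Option V) (v : V) : Vstar V :=
  if f v = none then uNode else origV v

/-- Underlying (asymmetric) edge description of G_M^*. -/
def starRel (f : V → Option V) (x y : Vstar V) : Prop :=
  (∃ v w, (GMgraph G rank f).Adj v w ∧ ¬ BlockingEdge G rank f v w ∧
    x = projV f v ∧ y = projV f w) ∨
  (∃ v, IsBlockEnd G rank f v ∧ x = projV f v ∧ y = bmap G rank f v)

/-- The auxiliary graph G_M^*. -/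
def GMstar (f : V → Option V) : SimpleGraph (Vstar V) where
  Adj x y := x ≠ y ∧ (starRel G rank f x y ∨ starRel G rank f y x)
  symm := ⟨fun x y h => ⟨h.1.symm, h.2.symm⟩⟩
  loopless := ⟨fun x h => h.1 rfl⟩

/-- The matching M viewed in G_M^*. -/
def fstar (f : V → Option V) : Vstar V → Option (Vstar V)
  | Sum.inl v => (f v).map Sum.inl
  | _ => none

/-- The dual objective of LP2. -/
def dualObj (α : V → ℝ) (y : Finset V → ℝ) : ℝ :=
  (∑ v, α v) +
    ∑ Z ∈ Finset.univ.filter (fun Z : Finset V => Odd Z.card), ((Z.card - 1 : ℝ) / 2) * y Z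

/-- Feasibility for LP2, the dual of the fractional matching LP with odd set constraints. -/
def DualFeasible (f : V → Option V) (α : V → ℝ) (y : Finset V → ℝ) : Prop :=
  (∀ v w, G.Adj v w →
    (wE rank f v w : ℝ) ≤ α v + α w +
      ∑ Z ∈ Finset.univ.filter (fun Z : Finset V => Odd Z.card ∧ v ∈ Z ∧ w ∈ Z), y Z) ∧
  (∀ v, (wL f v : ℝ) ≤ α v) ∧ (∀ Z, 0 ≤ y Z)

/-- A feasible solution of LP1: a fractional matching of G~ (loops allowed)
satisfying the odd-set constraints.  `x v v` is the value of the loop at v. -/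
def PrimalFeasible (x : V → V → ℝ) : Prop :=
  (∀ v w, x v w = x w v) ∧ (∀ v w, 0 ≤ x v w) ∧
  (∀ v w, v ≠ w → ¬ G.Adj v w → x v w = 0) ∧
  (∀ v, ∑ w, x v w = 1) ∧
  (∀ Z : Finset V, Odd Z.card →
    (∑ v ∈ Z, ∑ w ∈ Z, if v ≠ w then x v w else 0) ≤ (Z.card - 1 : ℝ))

/-- The w_M-value of a fractional matching x of G~. -/
def primalVal (f : V → Option V) (x : V → V → ℝ) : ℝ :=
  (∑ v, ∑ w, if v ≠ w then (wE rank f v w : ℝ) * x v w else 0) / 2 +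
    ∑ v, (wL f v : ℝ) * x v v

/-- A fractional matching of G~ (no odd-set constraints). -/
def FracMatching (x : V → V → ℝ) : Prop :=
  (∀ v w, x v w = x w v) ∧ (∀ v w, 0 ≤ x v w) ∧
  (∀ v w, v ≠ w → ¬ G.Adj v w → x v w = 0) ∧ (∀ v, ∑ w, x v w = 1)

/-- f is fractional popular ("truly popular"): no fractional matching has positive w_M-value. -/
def FracPopular (f : V → Option V) : Prop :=
  ∀ x, FracMatching G x → primalVal rank f x ≤ 0

/-- x is missed by some maximum matching of H (x is in the Gallai-Edmonds set D). -/
def Exposable {W : Type*} [Fintype W] (H : SimpleGraph W) (x : W) : Prop :=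
  ∃ g, MaxMatchingOn H g ∧ g x = none

/-- Reachability inside the set P by a walk of H. -/
def ReachWithin {W : Type*} (H : SimpleGraph W) (P : W → Prop) (x y : W) : Prop :=
  ∃ (p : ℕ → W) (n : ℕ), p 0 = x ∧ p n = y ∧ (∀ i, i ≤ n → P (p i)) ∧ ∀ i, i < n → H.Adj (p i) (p (i + 1))

/-- X: nodes of G_M^* reachable from blocking or star nodes on an alternating path. -/
def ReachX (f : V → Option V) (x : Vstar V) : Prop :=
  ∃ (p : ℕ → Vstar V) (n : ℕ), AltPath (GMstar G rank f) (fstar f) p n ∧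
    (∃ v, IsBlockEnd G rank f v ∧ p 0 = bmap G rank f v) ∧ p n = x

/-- K is a connected component of G_M^*[X ∩ D]. -/
def IsCompXD (f : V → Option V) (K : Finset (Vstar V)) : Prop :=
  K.Nonempty ∧
  (∀ x ∈ K, ReachX G rank f x ∧ Exposable (GMstar G rank f) x) ∧
  (∀ x ∈ K, ∀ y, ReachX G rank f y → Exposable (GMstar G rank f) y →
    (GMstar G rank f).Adj x y → y ∈ K) ∧
  (∀ x ∈ K, ∀ y ∈ K,
    ReachWithin (GMstar G rank f) (fun z => ReachX G rank f z ∧ Exposable (GMstar G rank f) z) x y)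

/-- The α of the dual witness constructed from the Gallai-Edmonds decomposition of G_M^*. -/
def alphaGE (f : V → Option V) (v : V) : ℝ :=
  if ReachX G rank f (origV v) ∧ Exposable (GMstar G rank f) (origV v) then -1
  else if ReachX G rank f (origV v) ∧ ¬ Exposable (GMstar G rank f) (origV v) ∧
      (∃ y, Exposable (GMstar G rank f) y ∧ (GMstar G rank f).Adj (origV v) y) then 1
  else 0

/-- The odd set of original nodes arising from a component K of G_M^*[X∩D]:
original members of K, with a star-node root replaced by the middle node of its star. -/
def ZofK (K : Finset (Vstar V)) : Finset V :=
  Finset.univ.filter (fun v => origV v ∈ K ∨ sNodeV v ∈ K)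

/-- The y of the dual witness constructed from the Gallai-Edmonds decomposition. -/
def yGE (f : V → Option V) (Z : Finset V) : ℝ :=
  if ∃ K, IsCompXD G rank f K ∧ 3 ≤ K.card ∧ Z = ZofK K then 2 else 0

end

lemma sum_one_point' {V : Type*} [Fintype V] [DecidableEq V] (a : V) (x : ℝ) :
    ∑ w, (if w = a then x else 0) = x := by simp

lemma sum_two_point' {V : Type*} [Fintype V] [DecidableEq V] (a b : V) (hab : a ≠ b) (x y : ℝ) :
    ∑ w, (if w = a then x else if w = b then y else 0) = x + y := by
  rw [← Finset.sum_subset (Finset.subset_univ {a, b})]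
  · rw [Finset.sum_pair hab]
    simp [hab, Ne.symm hab]
  · intro w _ hw
    simp only [Finset.mem_insert, Finset.mem_singleton, not_or] at hw
    simp [hw.1, hw.2]

lemma sum_three_point' {V : Type*} [Fintype V] [DecidableEq V] (a b d : V)
    (hab : a ≠ b) (had : a ≠ d) (hbd : b ≠ d) (x y z : ℝ) :
    ∑ w, (if w = a then x else if w = b then y else if w = d then z else 0) = x + y + z := by
  rw [← Finset.sum_subset (Finset.subset_univ {a, b, d})]
  · rw [Finset.sum_insert (by simp [hab, had]), Finset.sum_pair hbd]
    simp [hab, had, hbd, Ne.symm hab, Ne.symm had, Ne.symm hbd]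
    ring
  · intro w _ hw
    simp only [Finset.mem_insert, Finset.mem_singleton, not_or] at hw
    simp [hw.1, hw.2.1, hw.2.2]

/-- an odd alternating cycle c 0 = x, c 1 = v₁, ..., c (2k) = M(vₖ)
back to x, whose two edges at x are blocking and all other non-matching edges have
weight 0, yields (by putting 1/2 on the cycle, 1 on the loop at M(x) and χ_{M~}
elsewhere) a fractional matching of value 1; hence M is not fractional popular. -/
theorem cycle_through_star_not_frac_popular {V : Type*} [Fintype V] [DecidableEq V]
    (G : SimpleGraph V) (rank : V → V → ℕ) (hstrict : StrictPrefs G rank)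
    (f : V → Option V) (hM : IsMatchingOn G f)
    (c : ℕ → V) (k : ℕ) (hk : 1 ≤ k)
    (hinj : ∀ i j, i ≤ 2 * k → j ≤ 2 * k → c i = c j → i = j)
    (hclose : c (2 * k + 1) = c 0)
    (hMedge : ∀ i, i < k → f (c (2 * i + 1)) = some (c (2 * i + 2)))
    (hb1 : BlockingEdge G rank f (c 0) (c 1))
    (hb2 : BlockingEdge G rank f (c (2 * k)) (c (2 * k + 1)))
    (hzero : ∀ i, 0 < i → i < k →
      G.Adj (c (2 * i)) (c (2 * i + 1)) ∧ wE rank f (c (2 * i)) (c (2 * i + 1)) = 0)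
    (mx : V) (hmx : f (c 0) = some mx) (hmxoff : ∀ i, i ≤ 2 * k → c i ≠ mx) :
    let onC : V → V → Prop := fun a b => ∃ i, i < 2 * k + 1 ∧
      ((a = c i ∧ b = c (i + 1)) ∨ (b = c i ∧ a = c (i + 1)))
    let p : V → V → ℝ := fun a b =>
      if onC a b then 1 / 2
      else if a = b then (if f a = none ∨ a = mx then 1 else 0)
      else if f a = some b ∧ ¬ ((a = c 0 ∧ b = mx) ∨ (b = c 0 ∧ a = mx)) then 1 else 0
    FracMatching G p ∧ primalVal rank f p = 1 ∧ ¬ FracPopular G rank f := by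
  intro onC p
  classical
  have hply : ∀ a b, p a b = (if onC a b then 1 / 2
      else if a = b then (if f a = none ∨ a = mx then 1 else 0)
      else if f a = some b ∧ ¬ ((a = c 0 ∧ b = mx) ∨ (b = c 0 ∧ a = mx)) then 1 else 0 : ℝ) :=
    fun a b => rfl
  have hfsym := hM.1
  have hfadj := hM.2
  have hfmx : f mx = some (c 0) := hfsym _ _ hmx
  have hb2' : BlockingEdge G rank f (c (2*k)) (c 0) := by rw [← hclose]; exact hb2
  -- wE lemmas
  have hwE_symm : ∀ u v, wE rank f u v = wE rank f v u := by
    intro u v; unfold wE; ring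
  have hwE_match : ∀ u v, f u = some v → wE rank f u v = 0 := by
    intro u v huv
    have hvu := hfsym _ _ huv
    unfold wE vote
    rw [huv, hvu]
    simp
  have hwE_block : ∀ u v, BlockingEdge G rank f u v → wE rank f u v = 2 := by
    intro u v hbl
    obtain ⟨-, -, h1, h2⟩ := hbl
    unfold wE vote
    rw [if_pos h1, if_pos h2]
    norm_num
  -- index facts
  have hne : ∀ i j, i ≤ 2*k → j ≤ 2*k → i ≠ j → c i ≠ c j :=
    fun i j hi hj hij h => hij (hinj i j hi hj h)
  have hc01 : c 0 ≠ c 1 := hne 0 1 (by omega) (by omega) (by omega)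
  have hc02 : c 0 ≠ c (2*k) := hne 0 (2*k) (by omega) (by omega) (by omega)
  have hc12 : c 1 ≠ c (2*k) := hne 1 (2*k) (by omega) (by omega) (by omega)
  -- partners
  have hpart : ∀ j, j ≤ 2*k → (j = 0 ∧ f (c j) = some mx) ∨
      (Odd j ∧ j < 2*k ∧ f (c j) = some (c (j+1))) ∨
      (Even j ∧ 1 ≤ j ∧ f (c j) = some (c (j-1))) := by
    intro j hj
    rcases Nat.even_or_odd j with he | ho
    · rcases Nat.eq_zero_or_pos j with rfl | hpos
      · exact Or.inl ⟨rfl, hmx⟩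
      · obtain ⟨m, hm⟩ := he
        have hmk : m - 1 < k := by omega
        have h := hfsym _ _ (hMedge (m-1) hmk)
        right; right
        refine ⟨⟨m, hm⟩, hpos, ?_⟩
        rw [show 2*(m-1)+2 = j from by omega, show 2*(m-1)+1 = j - 1 from by omega] at h
        exact h
    · obtain ⟨m, hm⟩ := ho
      have hmk : m < k := by omega
      have h := hMedge m hmk
      right; left
      refine ⟨⟨m, hm⟩, by omega, ?_⟩
      rw [show 2*m+1 = j from by omega, show 2*m+2 = j+1 from by omega] at h
      exact h
  have hmatched : ∀ j, j ≤ 2*k → f (c j) ≠ none := by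
    intro j hj
    rcases hpart j hj with ⟨-, h⟩ | ⟨-, -, h⟩ | ⟨-, -, h⟩ <;> simp [h]
  -- cycle edges
  have hadj : ∀ i, i < 2*k+1 → G.Adj (c i) (c (i+1)) := by
    intro i hi
    rcases Nat.even_or_odd i with ⟨m, hm⟩ | ⟨m, hm⟩
    · by_cases hm0 : m = 0
      · rw [show i = 0 from by omega]
        simpa using hb1.1
      · by_cases hik : m < k
        · have h := (hzero m (by omega) hik).1
          rw [show i = 2*m from by omega]
          exact h
        · rw [show i = 2*k from by omega]
          exact hb2.1
    · have hmk : m < k := by omega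
      have h := hfadj _ _ (hMedge m hmk)
      rw [show i = 2*m+1 from by omega, show 2*m+1+1 = 2*m+2 from by omega]
      exact h
  have hCne : ∀ i, i < 2*k+1 → c i ≠ c (i+1) := fun i hi => (hadj i hi).ne
  -- onC basics
  have wrap : ∀ (x : V) i, i < 2*k+1 → x = c (i+1) → ∃ j, j ≤ 2*k ∧ x = c j := by
    intro x i hi hx
    by_cases h : i = 2*k
    · refine ⟨0, by omega, ?_⟩
      rw [h, hclose] at hx
      exact hx
    · exact ⟨i+1, by omega, hx⟩
  have honc_mem : ∀ a b, onC a b → (∃ j, j ≤ 2*k ∧ a = c j) ∧ (∃ j, j ≤ 2*k ∧ b = c j) := by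
    rintro a b ⟨i, hi, ⟨ha, hb⟩ | ⟨hb, ha⟩⟩
    · exact ⟨⟨i, by omega, ha⟩, wrap b i hi hb⟩
    · exact ⟨wrap a i hi ha, ⟨i, by omega, hb⟩⟩
  have honc_self : ∀ a, ¬ onC a a := by
    rintro a ⟨i, hi, ⟨h1, h2⟩ | ⟨h1, h2⟩⟩ <;> exact hCne i hi (h1.symm.trans h2)
  have honc_symm : ∀ a b, onC a b → onC b a := by
    rintro a b ⟨i, hi, h | h⟩
    exacts [⟨i, hi, Or.inr h⟩, ⟨i, hi, Or.inl h⟩]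
  have honc_adj : ∀ a b, onC a b → G.Adj a b := by
    rintro a b ⟨i, hi, ⟨rfl, rfl⟩ | ⟨rfl, rfl⟩⟩
    · exact hadj i hi
    · exact (hadj i hi).symm
  have honc_fwd : ∀ j w, j ≤ 2*k → onC (c j) w →
      (j < 2*k ∧ w = c (j+1)) ∨ (j = 2*k ∧ w = c 0) ∨ (1 ≤ j ∧ w = c (j-1)) ∨
      (j = 0 ∧ w = c (2*k)) := by
    intro j w hj hw
    obtain ⟨i, hi, ⟨h1, h2⟩ | ⟨h1, h2⟩⟩ := hw
    · have hij : j = i := hinj j i hj (by omega) h1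
      subst hij
      by_cases h : j = 2*k
      · right; left
        refine ⟨h, ?_⟩
        rw [h] at h2
        rwa [hclose] at h2
      · left; exact ⟨by omega, h2⟩
    · by_cases h : i = 2*k
      · subst h
        have hj0 : j = 0 := hinj j 0 hj (by omega) (by rw [h2, hclose])
        right; right; right
        exact ⟨hj0, h1⟩
      · have hij : j = i + 1 := hinj j (i+1) hj (by omega) h2
        right; right; left
        refine ⟨by omega, ?_⟩
        rw [hij]
        simpa using h1
  have honc_bwd1 : ∀ j, j < 2*k+1 → onC (c j) (c (j+1)) := fun j hj => ⟨j, hj, Or.inl ⟨rfl, rfl⟩⟩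
  have honc_bwd2 : ∀ j, 1 ≤ j → j ≤ 2*k → onC (c j) (c (j-1)) := by
    intro j h1 h2
    exact ⟨j-1, by omega, Or.inr ⟨rfl, by rw [Nat.sub_add_cancel h1]⟩⟩
  have honc_last : onC (c (2*k)) (c 0) := ⟨2*k, by omega, Or.inl ⟨rfl, hclose.symm⟩⟩
  have honc_last' : onC (c 0) (c (2*k)) := ⟨2*k, by omega, Or.inr ⟨rfl, hclose.symm⟩⟩
  -- rows of p for cycle vertices
  have hrow : ∀ j, j ≤ 2*k → ∃ j1 j2, j1 ≤ 2*k ∧ j2 ≤ 2*k ∧ j1 ≠ j2 ∧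
      (∀ w, p (c j) w = if w = c j1 then 1/2 else if w = c j2 then 1/2 else 0) := by
    intro j hj
    have key : ∃ j1 j2, j1 ≤ 2*k ∧ j2 ≤ 2*k ∧ j1 ≠ j2 ∧ j1 ≠ j ∧ j2 ≠ j ∧
        (∀ w, onC (c j) w ↔ (w = c j1 ∨ w = c j2)) ∧
        ((j = 0 ∧ f (c j) = some mx) ∨ f (c j) = some (c j1) ∨ f (c j) = some (c j2)) := by
      by_cases h0 : j = 0
      · subst h0
        refine ⟨1, 2*k, by omega, by omega, by omega, by omega, by omega, ?_, Or.inl ⟨rfl, hmx⟩⟩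
        intro w
        constructor
        · intro hw
          rcases honc_fwd 0 w (by omega) hw with ⟨-, h⟩ | ⟨h, -⟩ | ⟨h, -⟩ | ⟨-, h⟩
          · exact Or.inl h
          · omega
          · omega
          · exact Or.inr h
        · rintro (rfl | rfl)
          · exact honc_bwd1 0 (by omega)
          · exact honc_last'
      · by_cases h2k : j = 2*k
        · subst h2k
          refine ⟨2*k-1, 0, by omega, by omega, by omega, by omega, by omega, ?_, ?_⟩
          · intro w
            constructor
            · intro hw
              rcases honc_fwd (2*k) w (le_refl _) hw with ⟨h, -⟩ | ⟨-, h⟩ | ⟨-, h⟩ | ⟨h, -⟩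
              · omega
              · exact Or.inr h
              · exact Or.inl h
              · omega
            · rintro (rfl | rfl)
              · exact honc_bwd2 (2*k) (by omega) (le_refl _)
              · exact honc_last
          · right; left
            rcases hpart (2*k) (le_refl _) with ⟨h, -⟩ | ⟨-, h, -⟩ | ⟨-, -, h⟩
            · omega
            · omega
            · exact h
        · refine ⟨j+1, j-1, by omega, by omega, by omega, by omega, by omega, ?_, ?_⟩
          · intro w
            constructor
            · intro hw
              rcases honc_fwd j w hj hw with ⟨-, h⟩ | ⟨h, -⟩ | ⟨-, h⟩ | ⟨h, -⟩
              · exact Or.inl h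
              · omega
              · exact Or.inr h
              · omega
            · rintro (rfl | rfl)
              · exact honc_bwd1 j (by omega)
              · exact honc_bwd2 j (by omega) hj
          · rcases hpart j hj with ⟨h, -⟩ | ⟨-, -, h⟩ | ⟨-, -, h⟩
            · omega
            · exact Or.inr (Or.inl h)
            · exact Or.inr (Or.inr h)
    obtain ⟨j1, j2, hj1, hj2, h12, h1j, h2j, hchar, hpartner⟩ := key
    refine ⟨j1, j2, hj1, hj2, h12, ?_⟩
    intro w
    rw [hply]
    by_cases hw1 : w = c j1
    · rw [if_pos ((hchar w).2 (Or.inl hw1)), if_pos hw1]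
    · by_cases hw2 : w = c j2
      · rw [if_pos ((hchar w).2 (Or.inr hw2)), if_neg hw1, if_pos hw2]
      · rw [if_neg (fun h => by rcases (hchar w).1 h with h | h; exacts [hw1 h, hw2 h]),
          if_neg hw1, if_neg hw2]
        by_cases hwj : c j = w
        · rw [if_pos hwj, if_neg (by push_neg; exact ⟨hmatched j hj, hmxoff j hj⟩)]
        · rw [if_neg hwj, if_neg ?_]
          rintro ⟨hf, hexcl⟩
          rcases hpartner with ⟨hj0, hfm⟩ | hfm | hfm
          · rw [hfm] at hf
            exact hexcl (Or.inl ⟨by rw [hj0], (Option.some.inj hf).symm⟩)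
          · rw [hfm] at hf
            exact hw1 (Option.some.inj hf).symm
          · rw [hfm] at hf
            exact hw2 (Option.some.inj hf).symm
  -- degrees
  have hdeg : ∀ v, ∑ w, p v w = 1 := by
    intro v
    by_cases hv : ∃ j, j ≤ 2*k ∧ v = c j
    · obtain ⟨j, hj, rfl⟩ := hv
      obtain ⟨j1, j2, hj1, hj2, h12, hrowj⟩ := hrow j hj
      rw [Finset.sum_congr rfl (fun w _ => hrowj w),
        sum_two_point' _ _ (hne j1 j2 hj1 hj2 h12)]
      norm_num
    · push_neg at hv
      have hnonc : ∀ w, ¬ onC v w := by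
        intro w hw
        obtain ⟨⟨j, hj, hvj⟩, -⟩ := honc_mem v w hw
        exact hv j hj hvj
      by_cases hvmx : v = mx
      · subst hvmx
        have hrowm : ∀ w, p v w = if w = v then 1 else 0 := by
          intro w
          rw [hply, if_neg (hnonc w)]
          by_cases hw : w = v
          · subst hw
            simp
          · rw [if_neg (fun h => hw h.symm), if_neg ?_, if_neg hw]
            rintro ⟨hf, hexcl⟩
            rw [hfmx] at hf
            exact hexcl (Or.inr ⟨(Option.some.inj hf).symm, rfl⟩)
        rw [Finset.sum_congr rfl (fun w _ => hrowm w), sum_one_point']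
      · rcases hof : f v with _ | u
        · have hrowv : ∀ w, p v w = if w = v then 1 else 0 := by
            intro w
            rw [hply, if_neg (hnonc w)]
            by_cases hw : w = v
            · subst hw
              simp [hof]
            · rw [if_neg (fun h => hw h.symm), if_neg ?_, if_neg hw]
              rintro ⟨hf, -⟩
              rw [hof] at hf
              exact nomatch hf
          rw [Finset.sum_congr rfl (fun w _ => hrowv w), sum_one_point']
        · have hvu : v ≠ u := (hfadj v u hof).ne
          have hrowv : ∀ w, p v w = if w = u then 1 else 0 := by
            intro w
            rw [hply, if_neg (hnonc w)]
            by_cases hw : w = u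
            · have hcond : f v = some w ∧ ¬ ((v = c 0 ∧ w = mx) ∨ (w = c 0 ∧ v = mx)) := by
                refine ⟨by rw [hw]; exact hof, ?_⟩
                rintro (⟨h1, -⟩ | ⟨-, h2⟩)
                · exact hv 0 (by omega) h1
                · exact hvmx h2
              rw [if_neg (fun h : v = w => hvu (h.trans hw)), if_pos hcond, if_pos hw]
            · rw [if_neg hw]
              by_cases hwv : v = w
              · rw [if_pos hwv, if_neg (by push_neg; exact ⟨by simp [hof], hvmx⟩)]
              · rw [if_neg hwv, if_neg ?_]
                rintro ⟨hf, -⟩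
                rw [hof] at hf
                exact hw (Option.some.inj hf).symm
          rw [Finset.sum_congr rfl (fun w _ => hrowv w), sum_one_point']
  -- FracMatching
  have hsymmP : ∀ v w, p v w = p w v := by
    intro v w
    rw [hply, hply]
    by_cases h1 : onC v w
    · rw [if_pos h1, if_pos (honc_symm _ _ h1)]
    · rw [if_neg h1, if_neg (fun h => h1 (honc_symm _ _ h))]
      by_cases h2 : v = w
      · subst h2
        rfl
      · rw [if_neg h2, if_neg (fun h : w = v => h2 h.symm)]
        refine if_congr ?_ rfl rfl
        constructor
        · rintro ⟨hf, he⟩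
          exact ⟨hfsym _ _ hf, fun h => he (Or.symm h)⟩
        · rintro ⟨hf, he⟩
          exact ⟨hfsym _ _ hf, fun h => he (Or.symm h)⟩
  have hnonnegP : ∀ v w, 0 ≤ p v w := by
    intro v w
    rw [hply]
    split_ifs <;> norm_num
  have hzeroNA : ∀ v w, v ≠ w → ¬ G.Adj v w → p v w = 0 := by
    intro v w hvw hnadj
    rw [hply, if_neg (fun h => hnadj (honc_adj _ _ h)), if_neg hvw, if_neg ?_]
    rintro ⟨hf, -⟩
    exact hnadj (hfadj _ _ hf)
  have hfrac : FracMatching G p := ⟨hsymmP, hnonnegP, hzeroNA, hdeg⟩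
  -- edge weights
  have hwE01 : wE rank f (c 0) (c 1) = 2 := hwE_block _ _ hb1
  have hwE20 : wE rank f (c (2*k)) (c 0) = 2 := hwE_block _ _ hb2'
  have hprod : ∀ v w, v ≠ w → (wE rank f v w : ℝ) * p v w =
      (if (v = c 0 ∧ w = c 1) ∨ (v = c 1 ∧ w = c 0) ∨ (v = c (2*k) ∧ w = c 0) ∨
        (v = c 0 ∧ w = c (2*k)) then 1 else 0) := by
    intro v w hvw
    by_cases hP : (v = c 0 ∧ w = c 1) ∨ (v = c 1 ∧ w = c 0) ∨ (v = c (2*k) ∧ w = c 0) ∨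
        (v = c 0 ∧ w = c (2*k))
    · rw [if_pos hP]
      have hponc : p v w = 1/2 := by
        rw [hply, if_pos ?_]
        rcases hP with ⟨rfl, rfl⟩ | ⟨rfl, rfl⟩ | ⟨rfl, rfl⟩ | ⟨rfl, rfl⟩
        · exact honc_bwd1 0 (by omega)
        · exact honc_symm _ _ (honc_bwd1 0 (by omega))
        · exact honc_last
        · exact honc_last'
      have hwe : (wE rank f v w : ℝ) = 2 := by
        rcases hP with ⟨rfl, rfl⟩ | ⟨rfl, rfl⟩ | ⟨rfl, rfl⟩ | ⟨rfl, rfl⟩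
        · rw [hwE01]; norm_num
        · rw [hwE_symm, hwE01]; norm_num
        · rw [hwE20]; norm_num
        · rw [hwE_symm, hwE20]; norm_num
      rw [hponc, hwe]
      norm_num
    · rw [if_neg hP]
      by_cases honcvw : onC v w
      · have hwe : wE rank f v w = 0 := by
          obtain ⟨i, hi, hcase⟩ := honcvw
          rcases Nat.even_or_odd i with ⟨m, hm⟩ | ⟨m, hm⟩
          · by_cases hm0 : m = 0
            · exfalso
              have hi0 : i = 0 := by omega
              rcases hcase with ⟨h1, h2⟩ | ⟨h1, h2⟩
              · rw [hi0] at h1 h2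
                exact hP (Or.inl ⟨h1, by simpa using h2⟩)
              · rw [hi0] at h1 h2
                exact hP (Or.inr (Or.inl ⟨by simpa using h2, h1⟩))
            · by_cases hik : m < k
              · have h0 := (hzero m (by omega) hik).2
                rcases hcase with ⟨h1, h2⟩ | ⟨h1, h2⟩
                · rw [h1, h2, show i = 2*m from by omega]
                  exact h0
                · rw [h1, h2, show i = 2*m from by omega, hwE_symm]
                  exact h0
              · exfalso
                have hi2k : i = 2*k := by omega
                rcases hcase with ⟨h1, h2⟩ | ⟨h1, h2⟩
                · rw [hi2k] at h1 h2
                  rw [hclose] at h2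
                  exact hP (Or.inr (Or.inr (Or.inl ⟨h1, h2⟩)))
                · rw [hi2k] at h1 h2
                  rw [hclose] at h2
                  exact hP (Or.inr (Or.inr (Or.inr ⟨h2, h1⟩)))
          · have hmk : m < k := by omega
            have hfe : f (c (2*m+1)) = some (c (2*m+1+1)) := by
              rw [show 2*m+1+1 = 2*m+2 from by omega]
              exact hMedge m hmk
            rcases hcase with ⟨h1, h2⟩ | ⟨h1, h2⟩
            · rw [h1, h2, show i = 2*m+1 from by omega]
              exact hwE_match _ _ hfe
            · rw [h1, h2, show i = 2*m+1 from by omega, hwE_symm]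
              exact hwE_match _ _ hfe
        rw [hwe]
        simp
      · by_cases hf : f v = some w
        · rw [hwE_match _ _ hf]
          simp
        · have hp0 : p v w = 0 := by
            rw [hply, if_neg honcvw, if_neg hvw, if_neg (fun h => hf h.1)]
          rw [hp0, mul_zero]
  have hsum1 : ∀ v, ∑ w, (if v ≠ w then (wE rank f v w : ℝ) * p v w else 0) =
      (if v = c 0 then 2 else if v = c 1 then 1 else if v = c (2*k) then 1 else 0) := by
    intro v
    by_cases hv0 : v = c 0
    · subst hv0
      rw [if_pos rfl]
      have hrow0 : ∀ w, (if c 0 ≠ w then (wE rank f (c 0) w : ℝ) * p (c 0) w else 0) =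
          (if w = c 1 then 1 else if w = c (2*k) then 1 else 0) := by
        intro w
        by_cases hw : c 0 = w
        · subst hw
          rw [if_neg (fun h => h rfl), if_neg hc01, if_neg hc02]
        · rw [if_pos hw, hprod _ _ hw]
          by_cases h1 : w = c 1
          · rw [if_pos (Or.inl ⟨rfl, h1⟩), if_pos h1]
          · by_cases h2 : w = c (2*k)
            · rw [if_pos (Or.inr (Or.inr (Or.inr ⟨rfl, h2⟩))), if_neg h1, if_pos h2]
            · rw [if_neg ?_, if_neg h1, if_neg h2]
              rintro (⟨-, h⟩ | ⟨h, -⟩ | ⟨h, -⟩ | ⟨-, h⟩)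
              exacts [h1 h, hc01 h, hc02 h, h2 h]
      rw [Finset.sum_congr rfl (fun w _ => hrow0 w), sum_two_point' _ _ hc12]
      norm_num
    · by_cases hv1 : v = c 1
      · subst hv1
        rw [if_neg (Ne.symm hc01), if_pos rfl]
        have hrow1 : ∀ w, (if c 1 ≠ w then (wE rank f (c 1) w : ℝ) * p (c 1) w else 0) =
            (if w = c 0 then 1 else 0) := by
          intro w
          by_cases hw : c 1 = w
          · rw [if_neg (fun h => h hw), if_neg (fun h => hc01 (hw.trans h).symm)]
          · rw [if_pos hw, hprod _ _ hw]
            by_cases h0 : w = c 0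
            · rw [if_pos (Or.inr (Or.inl ⟨rfl, h0⟩)), if_pos h0]
            · rw [if_neg ?_, if_neg h0]
              rintro (⟨h, -⟩ | ⟨-, h⟩ | ⟨h, -⟩ | ⟨h, -⟩)
              exacts [hc01 h.symm, h0 h, hc12 h, hc01 h.symm]
        rw [Finset.sum_congr rfl (fun w _ => hrow1 w), sum_one_point']
      · by_cases hv2 : v = c (2*k)
        · subst hv2
          rw [if_neg (Ne.symm hc02), if_neg (Ne.symm hc12), if_pos rfl]
          have hrow2 : ∀ w, (if c (2*k) ≠ w then (wE rank f (c (2*k)) w : ℝ) * p (c (2*k)) w else 0) =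
              (if w = c 0 then 1 else 0) := by
            intro w
            by_cases hw : c (2*k) = w
            · rw [if_neg (fun h => h hw), if_neg (fun h => hc02 (hw.trans h).symm)]
            · rw [if_pos hw, hprod _ _ hw]
              by_cases h0 : w = c 0
              · rw [if_pos (Or.inr (Or.inr (Or.inl ⟨rfl, h0⟩))), if_pos h0]
              · rw [if_neg ?_, if_neg h0]
                rintro (⟨h, -⟩ | ⟨h, -⟩ | ⟨-, h⟩ | ⟨h, -⟩)
                exacts [hc02 h.symm, hc12 h.symm, h0 h, hc02 h.symm]
          rw [Finset.sum_congr rfl (fun w _ => hrow2 w), sum_one_point']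
        · rw [if_neg hv0, if_neg hv1, if_neg hv2]
          have hrowz : ∀ w, (if v ≠ w then (wE rank f v w : ℝ) * p v w else 0) = 0 := by
            intro w
            by_cases hvw : v = w
            · rw [if_neg (fun h => h hvw)]
            · rw [if_pos hvw, hprod _ _ hvw, if_neg ?_]
              rintro (⟨h, -⟩ | ⟨h, -⟩ | ⟨h, -⟩ | ⟨h, -⟩)
              exacts [hv0 h, hv1 h, hv2 h, hv0 h]
          rw [Finset.sum_congr rfl (fun w _ => hrowz w), Finset.sum_const_zero]
  have houter : ∑ v, (if v = c 0 then (2:ℝ) else if v = c 1 then 1 else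
      if v = c (2*k) then 1 else 0) = 4 := by
    rw [sum_three_point' _ _ _ hc01 hc02 hc12]
    norm_num
  have hloop : ∑ v, (wL f v : ℝ) * p v v = -1 := by
    have hpt : ∀ v, (wL f v : ℝ) * p v v = if v = mx then -1 else 0 := by
      intro v
      have hpvv : p v v = if f v = none ∨ v = mx then 1 else 0 := by
        rw [hply, if_neg (honc_self v), if_pos rfl]
      by_cases hv : v = mx
      · subst hv
        rw [if_pos rfl, hpvv, if_pos (Or.inr rfl)]
        unfold wL
        rw [if_neg (by simp [hfmx])]
        norm_num
      · rw [if_neg hv, hpvv]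
        by_cases hfv : f v = none
        · rw [if_pos (Or.inl hfv)]
          unfold wL
          rw [if_pos hfv]
          norm_num
        · rw [if_neg (by rintro (h | h); exacts [hfv h, hv h]), mul_zero]
    rw [Finset.sum_congr rfl (fun v _ => hpt v)]
    exact sum_one_point' mx (-1)
  have hval : primalVal rank f p = 1 := by
    unfold primalVal
    rw [Finset.sum_congr rfl (fun v _ => hsum1 v), houter, hloop]
    norm_num
  refine ⟨hfrac, hval, ?_⟩
  intro hpop
  have h := hpop p hfrac
  rw [hval] at h
  linarith
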